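/- arXiv:2511.22113 — 2 statements merged into one kernel-verified Lean document; each statement's English description precedes it below -/
import Mathlib

section
/- Let X ⊆ P^n be a finite set of points having CBP(r). Then for all integers i, HF_X(i) + HF_X(r − i) ≤ |X|. -/
open MvPolynomial Module

variable {K : Type*} [Field K] [CharZero K] {n : ℕ}

/-- Projective `n`-space over `K`, as the projectivization of `K^{n+1}`. -/
abbrev Proj (K : Type*) [Field K] (n : ℕ) := Projectivization K (Fin (n+1) → K)

/-- A polynomial vanishes at a projective point if it vanishes at every representative. -/
def vanishesAt (f : MvPolynomial (Fin (n+1)) K) (p : Proj K n) : Prop :=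
  ∀ (v : Fin (n+1) → K) (hv : v ≠ 0), Projectivization.mk K v hv = p →
    MvPolynomial.eval v f = 0

/-- `X` has the Cayley–Bacharach property of degree `r`: every hypersurface of degree `r`
containing all but one point of `X` contains all of `X`. -/
def hasCBP (X : Finset (Proj K n)) (r : ℕ) : Prop :=
  ∀ p ∈ X, ∀ f : MvPolynomial (Fin (n+1)) K, f.IsHomogeneous r →
    (∀ q ∈ X, q ≠ p → vanishesAt f q) → vanishesAt f p

/-- The set of projective points lying on the linear subspace given by a submodule `W`. -/
def projPoints (W : Submodule K (Fin (n+1) → K)) : Set (Proj K n) :=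
  {p | p.submodule ≤ W}

/-- Evaluation of degree-`i` forms at (representatives of) the points of `X`. -/
noncomputable def evalMap (X : Finset (Proj K n)) (i : ℕ) :
    (MvPolynomial.homogeneousSubmodule (Fin (n+1)) K i) →ₗ[K] (X → K) :=
  (LinearMap.pi fun p : X =>
    (MvPolynomial.aeval (Projectivization.rep (p : Proj K n))).toLinearMap).comp
    (Submodule.subtype _)

/-- The Hilbert function of `X`: the dimension of the degree-`i` piece of the homogeneous
coordinate ring of `X`, computed as the rank of the evaluation map. -/
noncomputable def HF (X : Finset (Proj K n)) (i : ℕ) : ℕ :=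
  Module.finrank K (LinearMap.range (evalMap X i))

/-- The Hilbert function extended to integers (zero in negative degrees). -/
noncomputable def hfZ (X : Finset (Proj K n)) (i : ℤ) : ℕ :=
  if 0 ≤ i then HF X i.toNat else 0

/-- The regularity index of `X`: the least degree where the Hilbert function reaches `|X|`. -/
noncomputable def regIndex (X : Finset (Proj K n)) : ℕ :=
  sInf {i | HF X i = X.card}

/-- The initial degree `α_{Y/X}` of `I_{Y/X} = I_Y / I_X ⊆ R = P/I_X`: the least degree of a
form vanishing on `Y` but not on all of `X`. -/
noncomputable def alphaDeg (X Y : Finset (Proj K n)) : ℕ :=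
  sInf {k | ∃ f : MvPolynomial (Fin (n+1)) K, f.IsHomogeneous k ∧
    (∀ q ∈ Y, vanishesAt f q) ∧ ∃ p ∈ X, ¬ vanishesAt f p}

/-- The points of `X` lying in a set `S`. -/
noncomputable def interF (X : Finset (Proj K n)) (S : Set (Proj K n)) : Finset (Proj K n) :=
  @Finset.filter _ (fun p => p ∈ S) (Classical.decPred _) X

/-- The points of `X` not lying in a set `S`. -/
noncomputable def diffF (X : Finset (Proj K n)) (S : Set (Proj K n)) : Finset (Proj K n) :=
  @Finset.filter _ (fun p => p ∉ S) (Classical.decPred _) X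

/-- A plane configuration: a union of `k` distinct positive-dimensional linear subspaces
of `ℙ^n` (a projective linear subspace is positive-dimensional when its defining submodule
has vector-space dimension at least `2`). -/
structure PlaneConfig (K : Type*) [Field K] (n : ℕ) where
  k : ℕ
  planes : Fin k → Submodule K (Fin (n+1) → K)
  injective : Function.Injective planes
  posdim : ∀ i, 2 ≤ Module.finrank K (planes i)

/-- The set of points of a plane configuration. -/
def PlaneConfig.points (P : PlaneConfig K n) : Set (Proj K n) :=
  ⋃ i, projPoints (P.planes i)

/-- The dimension of a plane configuration: the sum of the (projective) dimensions of
its components. -/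
noncomputable def PlaneConfig.dim (P : PlaneConfig K n) : ℕ :=
  ∑ i, (Module.finrank K (P.planes i) - 1)

/-- A plane configuration is skew if its components are pairwise disjoint. -/
def PlaneConfig.isSkew (P : PlaneConfig K n) : Prop :=
  ∀ i j, i ≠ j → P.planes i ⊓ P.planes j = ⊥

/-- A plane configuration is split if each component is disjoint from the span of the
other components. -/
def PlaneConfig.isSplit (P : PlaneConfig K n) : Prop :=
  ∀ i, P.planes i ⊓ (⨆ j ∈ ({i}ᶜ : Set (Fin P.k)), P.planes j) = ⊥

/-- `Z` lies on a plane configuration of dimension `d`. -/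
def liesOnConfig (Z : Finset (Proj K n)) (d : ℕ) : Prop :=
  ∃ P : PlaneConfig K n, P.dim = d ∧ ↑Z ⊆ P.points

/-- The Levinson–Ullery conjecture for the pair `(d, r)`: any finite set of points with
`CBP(r)` and at most `(d+1)r + 1` points lies on a plane configuration of dimension `d`. -/
def LUConj (K : Type*) [Field K] [CharZero K] (d r : ℕ) : Prop :=
  ∀ (m : ℕ) (Z : Finset (Proj K m)), hasCBP Z r → Z.card ≤ (d+1)*r + 1 → liesOnConfig Z d

set_option linter.unusedSectionVars false
section CBAux

variable {K : Type*} [Field K] [CharZero K] {n : ℕ}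

lemma eval_smul_homog {f : MvPolynomial (Fin (n+1)) K} {d : ℕ}
    (hf : f.IsHomogeneous d) (a : K) (v : Fin (n+1) → K) :
    MvPolynomial.eval (a • v) f = a ^ d * MvPolynomial.eval v f := by
  rw [MvPolynomial.eval_eq, MvPolynomial.eval_eq, Finset.mul_sum]
  refine Finset.sum_congr rfl fun m hm => ?_
  have hd : ∑ i ∈ m.support, m i = d := by
    have := hf (MvPolynomial.mem_support_iff.mp hm)
    simpa [Finsupp.weight_apply, Finsupp.sum] using this
  rw [← hd]
  simp only [Pi.smul_apply, smul_eq_mul, mul_pow]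
  rw [Finset.prod_mul_distrib, Finset.prod_pow_eq_pow_sum]
  ring

lemma vanishesAt_iff_rep {f : MvPolynomial (Fin (n+1)) K} {d : ℕ}
    (hf : f.IsHomogeneous d) (q : Proj K n) :
    vanishesAt f q ↔ MvPolynomial.eval q.rep f = 0 := by
  constructor
  · exact fun h => h q.rep (Projectivization.rep_nonzero q) (Projectivization.mk_rep q)
  · intro h v hv hq
    rw [← Projectivization.mk_rep q] at hq
    obtain ⟨a, ha⟩ :=
      (Projectivization.mk_eq_mk_iff K v q.rep hv (Projectivization.rep_nonzero q)).mp hq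
    rw [← ha, Units.smul_def, eval_smul_homog hf, h, mul_zero]

lemma evalMap_apply' (X : Finset (Proj K n)) (i : ℕ)
    (f : MvPolynomial.homogeneousSubmodule (Fin (n+1)) K i) (p : X) :
    evalMap X i f p = MvPolynomial.eval (p : Proj K n).rep (f : MvPolynomial (Fin (n+1)) K) := by
  show (MvPolynomial.aeval (p : Proj K n).rep) (f : MvPolynomial (Fin (n+1)) K) = _
  rw [← MvPolynomial.coe_aeval_eq_eval]
  rfl

end CBAux

open scoped Classical in
/-- The indicator vector of a point. -/
noncomputable def dd (K : Type*) [Field K] {ι : Type*} (p : ι) : ι → K :=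
  fun q => if q = p then 1 else 0

lemma dd_self {ι : Type*} (p : ι) : dd K p p = 1 := by simp [dd]

lemma dd_ne {ι : Type*} {p q : ι} (h : q ≠ p) : dd K p q = 0 := by simp [dd, h]

lemma mul_dd {ι : Type*} (u : ι → K) (p : ι) : u * dd K p = u p • dd K p := by
  classical
  funext q
  by_cases h : q = p
  · subst h; simp [dd]
  · simp [dd, h]

lemma range_support (r : ℕ) (X : Finset (Proj K n)) (hCB : hasCBP X r) {v : ↥X → K}
    (hv : v ∈ LinearMap.range (evalMap X r)) (p : ↥X) (h : ∀ q : ↥X, q ≠ p → v q = 0) :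
    v p = 0 := by
  obtain ⟨f, rfl⟩ := hv
  have hf : (f : MvPolynomial (Fin (n+1)) K).IsHomogeneous r :=
    (MvPolynomial.mem_homogeneousSubmodule _ _).mp f.2
  have hvan : vanishesAt (f : MvPolynomial (Fin (n+1)) K) (p : Proj K n) := by
    refine hCB p p.2 f hf fun q hq hne => (vanishesAt_iff_rep hf q).mpr ?_
    have := h ⟨q, hq⟩ (fun e => hne (congrArg Subtype.val e))
    rwa [evalMap_apply'] at this
  rw [evalMap_apply']
  exact (vanishesAt_iff_rep hf (p : Proj K n)).mp hvan

lemma dd_not_mem_range (r : ℕ) (X : Finset (Proj K n)) (hCB : hasCBP X r) (p : ↥X) :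
    dd K p ∉ LinearMap.range (evalMap X r) := by
  intro hmem
  have := range_support r X hCB hmem p (fun q hq => dd_ne hq)
  rw [dd_self] at this
  exact one_ne_zero this

lemma exists_dual_ne {ι : Type*} [Fintype ι] (V : Submodule K (ι → K)) (x : ι → K)
    (hx : x ∉ V) :
    ∃ φ : Module.Dual K (ι → K), (∀ v ∈ V, φ v = 0) ∧ φ x ≠ 0 := by
  have h1 : V.mkQ x ≠ 0 := by
    rw [Submodule.mkQ_apply, Ne, Submodule.Quotient.mk_eq_zero]
    exact hx
  have h2 : ¬ ∀ ψ : Module.Dual K ((ι → K) ⧸ V), ψ (V.mkQ x) = 0 := by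
    rw [Module.forall_dual_apply_eq_zero_iff K (V.mkQ x)]
    exact h1
  obtain ⟨ψ, hψ⟩ := not_forall.mp h2
  refine ⟨ψ.comp V.mkQ, fun v hv => ?_, hψ⟩
  simp [Submodule.mkQ_apply, (Submodule.Quotient.mk_eq_zero V).mpr hv]

lemma exists_good_dual (r : ℕ) (X : Finset (Proj K n)) (hCB : hasCBP X r) :
    ∃ φ : Module.Dual K (↥X → K), (∀ v ∈ LinearMap.range (evalMap X r), φ v = 0) ∧
      ∀ p : ↥X, φ (dd K p) ≠ 0 := by
  classical
  suffices h : ∀ S : Finset ↥X, ∃ φ : Module.Dual K (↥X → K),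
      (∀ v ∈ LinearMap.range (evalMap X r), φ v = 0) ∧ ∀ p ∈ S, φ (dd K p) ≠ 0 by
    obtain ⟨φ, h1, h2⟩ := h Finset.univ
    exact ⟨φ, h1, fun p => h2 p (Finset.mem_univ p)⟩
  intro S
  induction S using Finset.induction_on with
  | empty => exact ⟨0, by simp, by simp⟩
  | insert q S hq ih =>
    obtain ⟨φ, hφ0, hφS⟩ := ih
    obtain ⟨μ, hμ0, hμq⟩ := exists_dual_ne (LinearMap.range (evalMap X r)) (dd K q)
      (dd_not_mem_range r X hCB q)
    obtain ⟨t, ht⟩ := Infinite.exists_notMem_finset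
      ((insert q S).image (fun p => - φ (dd K p) / μ (dd K p)))
    refine ⟨φ + t • μ, fun v hv => by simp [hφ0 v hv, hμ0 v hv], fun p hp => ?_⟩
    simp only [LinearMap.add_apply, LinearMap.smul_apply, smul_eq_mul]
    intro hzero
    by_cases hμp : μ (dd K p) = 0
    · rcases Finset.mem_insert.mp hp with rfl | hpS
      · exact hμq hμp
      · rw [hμp, mul_zero, add_zero] at hzero
        exact hφS p hpS hzero
    · apply ht
      refine Finset.mem_image.mpr ⟨p, hp, ?_⟩
      rw [div_eq_iff hμp]
      linear_combination -hzero

lemma mul_mem_range {a b : ℕ} (X : Finset (Proj K n)) {u w : ↥X → K}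
    (hu : u ∈ LinearMap.range (evalMap X a)) (hw : w ∈ LinearMap.range (evalMap X b)) :
    u * w ∈ LinearMap.range (evalMap X (a + b)) := by
  obtain ⟨f, rfl⟩ := hu
  obtain ⟨g, rfl⟩ := hw
  refine ⟨⟨(f : MvPolynomial (Fin (n+1)) K) * g, (MvPolynomial.mem_homogeneousSubmodule _ _).mpr
    (((MvPolynomial.mem_homogeneousSubmodule _ _).mp f.2).mul
      ((MvPolynomial.mem_homogeneousSubmodule _ _).mp g.2))⟩, ?_⟩
  funext p
  rw [Pi.mul_apply, evalMap_apply', evalMap_apply', evalMap_apply', map_mul]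

lemma HF_le_card (X : Finset (Proj K n)) (j : ℕ) : HF X j ≤ X.card := by
  have h := Submodule.finrank_le (LinearMap.range (evalMap X j))
  rwa [Module.finrank_fintype_fun_eq_card, Fintype.card_coe] at h

lemma HF_add_le {r a b : ℕ} (hab : a + b = r) (X : Finset (Proj K n)) (hCB : hasCBP X r) :
    HF X a + HF X b ≤ X.card := by
  classical
  obtain ⟨φ, hφ0, hφ⟩ := exists_good_dual r X hCB
  set Va := LinearMap.range (evalMap X a) with hVa
  set Vb := LinearMap.range (evalMap X b) with hVb
  let Φ : (↥X → K) →ₗ[K] Module.Dual K (↥X → K) :=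
    (LinearMap.mul K (↥X → K)).compr₂ φ
  have hΦ : ∀ u w : ↥X → K, Φ u w = φ (u * w) := fun u w => rfl
  have hinj : Function.Injective Φ := by
    rw [← LinearMap.ker_eq_bot, LinearMap.ker_eq_bot']
    intro u hu
    funext p
    have h1 : Φ u (dd K p) = 0 := by rw [hu]; rfl
    rw [hΦ, mul_dd, map_smul, smul_eq_mul] at h1
    exact (mul_eq_zero.mp h1).resolve_right (hφ p)
  have hle : Vb.map Φ ≤ Va.dualAnnihilator := by
    rintro - ⟨w, hw, rfl⟩
    rw [Submodule.mem_dualAnnihilator]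
    intro u hu
    rw [hΦ]
    apply hφ0
    have hba : b + a = r := by omega
    rw [← hba]
    exact mul_mem_range X hw hu
  have e1 : finrank K Vb = finrank K (Vb.map Φ) :=
    (Submodule.equivMapOfInjective Φ hinj Vb).finrank_eq
  have e2 : finrank K (Vb.map Φ) ≤ finrank K Va.dualAnnihilator :=
    Submodule.finrank_mono hle
  have e3 : finrank K Va.dualAnnihilator = finrank K ((↥X → K) ⧸ Va) :=
    (Subspace.quotEquivAnnihilator Va).finrank_eq.symm
  have e4 : finrank K ((↥X → K) ⧸ Va) + finrank K Va = finrank K (↥X → K) :=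
    Submodule.finrank_quotient_add_finrank Va
  have e5 : finrank K (↥X → K) = X.card := by
    rw [Module.finrank_fintype_fun_eq_card, Fintype.card_coe]
  have : HF X a + HF X b ≤ finrank K Va + finrank K ((↥X → K) ⧸ Va) := by
    unfold HF
    rw [← hVa, ← hVb]
    omega
  omega

/-- If `X` has `CBP(r)`, then `HF_X(i) + HF_X(r − i) ≤ |X|` for all
integers `i`. -/
theorem stmt8 (r : ℕ) (X : Finset (Proj K n)) (hCB : hasCBP X r) :
    ∀ i : ℤ, hfZ X i + hfZ X ((r : ℤ) - i) ≤ X.card := by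
  intro i
  by_cases h0 : 0 ≤ i
  · by_cases hr : i ≤ (r : ℤ)
    · have h1 : hfZ X i = HF X i.toNat := if_pos h0
      have h2 : hfZ X ((r : ℤ) - i) = HF X ((r : ℤ) - i).toNat := if_pos (by omega)
      rw [h1, h2]
      exact HF_add_le (by omega) X hCB
    · have h2 : hfZ X ((r : ℤ) - i) = 0 := if_neg (by omega)
      have h1 : hfZ X i = HF X i.toNat := if_pos h0
      rw [h1, h2, add_zero]
      exact HF_le_card X _
  · have h1 : hfZ X i = 0 := if_neg h0
    have h2 : hfZ X ((r : ℤ) - i) = HF X ((r : ℤ) - i).toNat := if_pos (by omega)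
    rw [h1, h2, zero_add]
    exact HF_le_card X _
end

section
/- Let X ⊆ P^n have CBP(r) with |X| ≤ (d+1)r + 1, and let A be a k-plane with k ≤ d. Assume the Levinson–Ullery conjecture holds for all pairs (i, j) with i ≤ d and j < r. If |X ∩ A| ≥ d + 1, then X ∖ A lies on a plane configuration of dimension d. -/
open MvPolynomial Module

variable {K : Type*} [Field K] [CharZero K] {n : ℕ}

section Aux

set_option linter.unusedSectionVars false

lemma eval_smul_of_isHomogeneous {N m : ℕ} {f : MvPolynomial (Fin N) K}
    (hf : f.IsHomogeneous m) (a : K) (v : Fin N → K) :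
    MvPolynomial.eval (a • v) f = a ^ m * MvPolynomial.eval v f := by
  rw [eval_eq', eval_eq', Finset.mul_sum]
  apply Finset.sum_congr rfl
  intro d hd
  have hdeg : ∑ i, d i = m := by
    have h1 : Finsupp.weight (1 : Fin N → ℕ) d = m := hf (MvPolynomial.mem_support_iff.mp hd)
    have h2 : Finsupp.degree d = Finsupp.weight 1 d := by
      rw [Finsupp.degree_eq_weight_one]
      rfl
    rw [← h1, ← h2, Finsupp.degree]
    exact (Finset.sum_subset (Finset.subset_univ _)
      (fun x _ hx => Finsupp.notMem_support_iff.mp hx)).symm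
  have hpt : ∀ i : Fin N, (a • v) i ^ d i = a ^ d i * v i ^ d i := by
    intro i; simp [mul_pow]
  simp_rw [hpt]
  rw [Finset.prod_mul_distrib, Finset.prod_pow_eq_pow_sum, hdeg]
  ring

/-- For homogeneous `f`, vanishing at the canonical representative implies vanishing
at the projective point. -/
lemma vanishesAt_of_eval_rep {m : ℕ} {f : MvPolynomial (Fin (n+1)) K}
    (hf : f.IsHomogeneous m) (p : Proj K n)
    (h : MvPolynomial.eval p.rep f = 0) : vanishesAt f p := by
  intro v hv hmk
  rw [← Projectivization.mk_rep p, Projectivization.mk_eq_mk_iff] at hmk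
  obtain ⟨a, ha⟩ := hmk
  rw [← ha, Units.smul_def, eval_smul_of_isHomogeneous hf, h, mul_zero]

/-- Linear functionals as degree-1 polynomials. -/
noncomputable def dualPoly (φ : Module.Dual K (Fin (n+1) → K)) : MvPolynomial (Fin (n+1)) K :=
  ∑ i, MvPolynomial.C (φ (Pi.single i 1)) * MvPolynomial.X i

lemma dualPoly_isHomogeneous (φ : Module.Dual K (Fin (n+1) → K)) :
    (dualPoly φ).IsHomogeneous 1 :=
  IsHomogeneous.sum _ _ _ (fun i _ => isHomogeneous_C_mul_X _ _)

lemma eval_dualPoly (φ : Module.Dual K (Fin (n+1) → K)) (v : Fin (n+1) → K) :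
    MvPolynomial.eval v (dualPoly φ) = φ v := by
  have hv : v = ∑ i, v i • (Pi.single i 1 : Fin (n+1) → K) := by
    funext j
    simp [Pi.single_apply, Finset.sum_apply]
  conv_rhs => rw [hv]
  rw [map_sum]
  simp [dualPoly, mul_comm]

end Aux

/-- Suppose `X` has `CBP(r)` with `|X| ≤ (d+1)r + 1`, `A` is a `k`-plane with
`k ≤ d`, and the Levinson–Ullery conjecture holds for all pairs `(i, j)` with `i ≤ d` and
`j < r`. If `|X ∩ A| ≥ d + 1`, then `X ∖ A` lies on a plane configuration of dimension `d`. -/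
theorem stmt18 (d r k : ℕ) (hk : k ≤ d) (X : Finset (Proj K n))
    (hCB : hasCBP X r) (hcard : X.card ≤ (d + 1) * r + 1)
    (A : Submodule K (Fin (n+1) → K)) (hA : Module.finrank K A = k + 1)
    (hLU : ∀ i j : ℕ, i ≤ d → j < r → LUConj K i j)
    (hXA : d + 1 ≤ (interF X (projPoints A)).card) :
    liesOnConfig (diffF X (projPoints A)) d := by
  classical
  set S := projPoints A with hS
  set G := interF X S with hG
  set Z := diffF X S with hZ
  have hZG : Z = X \ G := by
    unfold Z G S
    unfold interF diffF
    ext p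
    simp only [Finset.mem_filter, Finset.mem_sdiff]
    tauto
  have hGsub : G ⊆ X := Finset.filter_subset _ _
  have hGX : G.card ≤ X.card := Finset.card_le_card hGsub
  have hZcard : Z.card = X.card - G.card := by
    rw [hZG, Finset.card_sdiff_of_subset hGsub]
  rcases Nat.eq_zero_or_pos r with hr0 | hr
  · -- r = 0 case
    subst hr0
    have hd0 : d = 0 := by omega
    have hZ0 : Z.card = 0 := by omega
    have hZe : Z = ∅ := Finset.card_eq_zero.mp hZ0
    refine ⟨⟨0, Fin.elim0, fun i => i.elim0, fun i => i.elim0⟩, ?_, ?_⟩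
    · simp [PlaneConfig.dim, hd0]
    · rw [hZe]; simp
  · -- main case: apply LU conjecture for (d, r-1)
    apply hLU d (r-1) le_rfl (by omega) n Z
    · -- Z has CBP(r-1)
      intro p hp f hf hvan
      have hpX : p ∈ X ∧ p ∉ S := by
        have := hp
        rw [hZ] at this
        unfold diffF at this
        simpa using this
      have hrep : p.rep ∉ A := by
        intro hmem
        apply hpX.2
        show p.submodule ≤ A
        rw [Projectivization.submodule_eq]
        exact (Submodule.span_singleton_le_iff_mem _ _).mpr hmem
      obtain ⟨φ, hφ1, hφ2⟩ := A.exists_dual_map_eq_bot_of_notMem hrep inferInstance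
      have hmemA : ∀ x ∈ A, φ x = 0 := by
        intro x hx
        have hmm : φ x ∈ A.map φ := Submodule.mem_map_of_mem hx
        rw [hφ2] at hmm
        exact (Submodule.mem_bot K).mp hmm
      have hlf : (dualPoly φ * f).IsHomogeneous r := by
        have h1 := (dualPoly_isHomogeneous φ).mul hf
        have h2 : 1 + (r-1) = r := by omega
        rwa [h2] at h1
      have hvp : vanishesAt (dualPoly φ * f) p := by
        apply hCB p hpX.1 _ hlf
        intro q hq hqp v hv hmk
        rw [map_mul, eval_dualPoly]
        by_cases hqS : q ∈ S
        · have hrepq : q.rep ∈ A := by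
            have hle : q.submodule ≤ A := hqS
            rw [Projectivization.submodule_eq, Submodule.span_singleton_le_iff_mem] at hle
            exact hle
          have hvA : v ∈ A := by
            rw [← Projectivization.mk_rep q, Projectivization.mk_eq_mk_iff] at hmk
            obtain ⟨a, ha⟩ := hmk
            rw [← ha, Units.smul_def]
            exact A.smul_mem _ hrepq
          rw [hmemA v hvA, zero_mul]
        · have hqZ : q ∈ Z := by
            rw [hZ]
            unfold diffF
            simp only [Finset.mem_filter]
            exact ⟨hq, hqS⟩
          rw [hvan q hqZ hqp v hv hmk, mul_zero]
      have h0 : MvPolynomial.eval p.rep (dualPoly φ * f) = 0 :=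
        hvp p.rep (Projectivization.rep_nonzero p) (Projectivization.mk_rep p)
      rw [map_mul, eval_dualPoly] at h0
      have hf0 : MvPolynomial.eval p.rep f = 0 := by
        rcases mul_eq_zero.mp h0 with h | h
        · exact absurd h hφ1
        · exact h
      exact vanishesAt_of_eval_rep hf p hf0
    · -- cardinality bound
      have hmul : (d+1) * r = (d+1)*(r-1) + (d+1) := by
        cases r with
        | zero => omega
        | succ m => simp [Nat.succ_sub_one, Nat.mul_succ]
      omega
end
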